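/- If a convex set D ⊆ X is the union of finitely many generalized polyhedral convex sets, then D is itself a generalized polyhedral convex set. -/

import Mathlib

open Pointwise

/-- A generalized polyhedral convex set: the intersection of a closed affine
subspace with finitely many closed half-spaces given by continuous linear
functionals. -/
def IsGPCS {X : Type*} [AddCommGroup X] [Module ℝ X] [TopologicalSpace X]
    (D : Set X) : Prop :=
  ∃ (p : ℕ) (f : Fin p → (X →L[ℝ] ℝ)) (α : Fin p → ℝ)
    (x₀ : X) (W : Submodule ℝ X),
    IsClosed (x₀ +ᵥ (W : Set X)) ∧
    D = {x ∈ x₀ +ᵥ (W : Set X) | ∀ i, f i x ≤ α i}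

/-- A polyhedral convex set: a finite intersection of closed half-spaces. -/
def IsPCS {X : Type*} [AddCommGroup X] [Module ℝ X] [TopologicalSpace X]
    (D : Set X) : Prop :=
  ∃ (p : ℕ) (f : Fin p → (X →L[ℝ] ℝ)) (α : Fin p → ℝ),
    D = {x | ∀ i, f i x ≤ α i}

/-- `F` is a face of the convex set `C`. -/
def IsFaceOf {X : Type*} [AddCommGroup X] [Module ℝ X] (F C : Set X) : Prop :=
  Convex ℝ F ∧ F ⊆ C ∧
    ∀ ⦃x y : X⦄, x ∈ C → y ∈ C → ∀ t : ℝ, 0 < t → t < 1 →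
      (1 - t) • x + t • y ∈ F → x ∈ F ∧ y ∈ F

/-!
The union `D'` is closed and convex, so its lineality space `L` is a closed subspace. Each piece
lies in `K + U` for a subspace `K` along which it is invariant and a finite-dimensional `U`; since
`D'` is closed and convex, `K ≤ L`. Hence `D' = L + Q`, where `Q` is the slice of `D'` by a
finite-dimensional `V` with `L ⊓ V = ⊥`. The slice is a convex finite union of polyhedra in `V`,
hence a polyhedron by Klee's theorem: homogenize the pieces into polyhedral cones whose union is
the closure of a convex cone, then the bipolar theorem and Farkas' lemma (with Weyl's theorem,
proved by Fourier–Motzkin elimination) show that the dual of that union, and then the union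
itself, are polyhedral. Finally the inequalities of `Q` extend, by Hahn–Banach in `X ⧸ L`, to
continuous functionals vanishing on `L`.
-/

section Polyhedron

variable {E F : Type*} [AddCommGroup E] [Module ℝ E] [AddCommGroup F] [Module ℝ F]

/-- Unlike in `IsPCS`, the functionals need not be continuous; in a finite-dimensional Hausdorff
space this makes no difference. -/
def IsPolyhedron (s : Set E) : Prop :=
  ∃ (n : ℕ) (f : Fin n → Module.Dual ℝ E) (α : Fin n → ℝ), s = {x | ∀ i, f i x ≤ α i}

theorem isPolyhedron_setOf {ι : Type*} [Finite ι] (f : ι → Module.Dual ℝ E) (α : ι → ℝ) :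
    IsPolyhedron {x | ∀ i, f i x ≤ α i} := by
  let e := Finite.equivFin ι
  refine ⟨_, f ∘ e.symm, α ∘ e.symm, Set.ext fun x => ?_⟩
  simp only [Set.mem_ofPred_eq, Function.comp_apply]
  exact ⟨fun h i => h _, fun h i => by simpa using h (e i)⟩

theorem isPolyhedron_empty : IsPolyhedron (∅ : Set E) := by
  convert isPolyhedron_setOf (fun _ : Unit => (0 : Module.Dual ℝ E)) (fun _ => -1)
  ext x
  simp

theorem IsPolyhedron.inter {s t : Set E} (hs : IsPolyhedron s) (ht : IsPolyhedron t) :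
    IsPolyhedron (s ∩ t) := by
  obtain ⟨m, f, α, rfl⟩ := hs
  obtain ⟨n, g, β, rfl⟩ := ht
  convert isPolyhedron_setOf (Sum.elim f g) (Sum.elim α β) using 1
  ext x
  simp [Sum.forall]

theorem isPolyhedron_iInter {ι : Type*} [Finite ι] {s : ι → Set E}
    (hs : ∀ i, IsPolyhedron (s i)) : IsPolyhedron (⋂ i, s i) := by
  choose n f α hf using hs
  convert isPolyhedron_setOf (fun k : Σ i, Fin (n i) => f k.1 k.2) (fun k => α k.1 k.2) using 1
  ext x
  simp [hf, Sigma.forall]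

theorem IsPolyhedron.preimage {s : Set E} (hs : IsPolyhedron s) (g : F →ₗ[ℝ] E) :
    IsPolyhedron (g ⁻¹' s) := by
  obtain ⟨n, f, α, rfl⟩ := hs
  exact ⟨n, fun i => f i ∘ₗ g, α, rfl⟩

theorem IsPolyhedron.vadd {s : Set E} (hs : IsPolyhedron s) (a : E) :
    IsPolyhedron (a +ᵥ s) := by
  obtain ⟨n, f, α, rfl⟩ := hs
  refine ⟨n, f, fun i => α i + f i a, Set.ext fun x => ?_⟩
  simp only [Set.mem_vadd_set_iff_neg_vadd_mem, vadd_eq_add, Set.mem_ofPred_eq, map_add, map_neg]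
  exact forall_congr' fun i => by constructor <;> intro h <;> linarith

theorem isPolyhedron_setOf_eq_zero {ι : Type*} [Finite ι] (f : ι → Module.Dual ℝ E) :
    IsPolyhedron {x | ∀ i, f i x = 0} := by
  convert isPolyhedron_setOf (Sum.elim f (-f)) 0 using 1
  ext x
  simp [Sum.forall, le_antisymm_iff, forall_and]

theorem isPolyhedron_submodule [FiniteDimensional ℝ E] (S : Submodule ℝ E) :
    IsPolyhedron (S : Set E) := by
  let b := Module.finBasis ℝ (E ⧸ S)
  convert isPolyhedron_setOf_eq_zero fun i => b.coord i ∘ₗ S.mkQ using 1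
  ext x
  rw [SetLike.mem_coe, ← Submodule.Quotient.mk_eq_zero S, b.ext_elem_iff]
  simp

theorem IsPolyhedron.isClosed [TopologicalSpace E] [IsTopologicalAddGroup E]
    [ContinuousSMul ℝ E] [T2Space E] [FiniteDimensional ℝ E] {s : Set E} (hs : IsPolyhedron s) :
    IsClosed s := by
  obtain ⟨n, f, α, rfl⟩ := hs
  simp only [Set.ofPred_forall]
  exact isClosed_iInter fun i =>
    isClosed_le (f i).continuous_of_finiteDimensional continuous_const

end Polyhedron

section FourierMotzkin

variable {E : Type*} [AddCommGroup E] [Module ℝ E]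

theorem exists_between_of_finite {ι κ : Type*} [Finite ι] [Finite κ] (l : ι → ℝ) (u : κ → ℝ)
    (h : ∀ i j, l i ≤ u j) : ∃ t, (∀ i, l i ≤ t) ∧ ∀ j, t ≤ u j := by
  rcases isEmpty_or_nonempty ι with hι | hι
  · rcases isEmpty_or_nonempty κ with hκ | hκ
    · exact ⟨0, hι.elim, hκ.elim⟩
    · obtain ⟨j₀, hj₀⟩ := Finite.exists_min u
      exact ⟨u j₀, hι.elim, hj₀⟩
  · obtain ⟨i₀, hi₀⟩ := Finite.exists_max l
    exact ⟨l i₀, hi₀, h i₀⟩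

/-- One step of Fourier–Motzkin elimination. -/
theorem exists_forall_add_mul_le_iff {ι : Type*} [Finite ι] (a c b : ι → ℝ) :
    (∃ t, ∀ i, a i + t * c i ≤ b i) ↔
      (∀ i, c i = 0 → a i ≤ b i) ∧
        ∀ i j, 0 < c i → c j < 0 → c i * a j - c j * a i ≤ c i * b j - c j * b i := by
  constructor
  · rintro ⟨t, ht⟩
    refine ⟨fun i hi => by simpa [hi] using ht i, fun i j hi hj => ?_⟩
    nlinarith [mul_le_mul_of_nonneg_left (ht j) hi.le,
      mul_le_mul_of_nonneg_left (ht i) (neg_nonneg.2 hj.le)]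
  · rintro ⟨hzero, hpair⟩
    obtain ⟨t, hlow, hup⟩ := exists_between_of_finite
      (fun j : {j // c j < 0} => (b j - a j) / c j) (fun i : {i // 0 < c i} => (b i - a i) / c i)
      fun j i => by
        rw [le_div_iff₀ i.2, div_mul_eq_mul_div, div_le_iff_of_neg j.2]
        linarith [hpair i j i.2 j.2]
    refine ⟨t, fun i => ?_⟩
    rcases lt_trichotomy (c i) 0 with hi | hi | hi
    · have := hlow ⟨i, hi⟩
      rw [div_le_iff_of_neg hi] at this
      linarith
    · simpa [hi] using hzero i hi
    · have := hup ⟨i, hi⟩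
      rw [le_div_iff₀ hi] at this
      linarith

theorem IsPolyhedron.image_fst {S : Set (E × ℝ)} (hS : IsPolyhedron S) :
    IsPolyhedron (Prod.fst '' S) := by
  obtain ⟨n, f, α, rfl⟩ := hS
  let a i : Module.Dual ℝ E := f i ∘ₗ LinearMap.inl ℝ E ℝ
  let c i : ℝ := f i (0, 1)
  have hf : ∀ i x t, f i (x, t) = a i x + t * c i := fun i x t => by
    rw [show (x, t) = ((x, 0) : E × ℝ) + t • (0, 1) by ext <;> simp, map_add, map_smul]
    rfl
  convert isPolyhedron_setOf
    (Sum.elim (fun i : {i // c i = 0} => a i)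
      (fun p : {i // 0 < c i} × {j // c j < 0} => c p.1 • a p.2 - c p.2 • a p.1))
    (Sum.elim (fun i => α i) (fun p => c p.1 * α p.2 - c p.2 * α p.1)) using 1
  ext x
  simp only [Set.mem_image, Prod.exists, exists_and_right, exists_eq_right, Set.mem_ofPred_eq,
    hf, exists_forall_add_mul_le_iff, Sum.forall, Sum.elim_inl, Sum.elim_inr, Subtype.forall,
    Prod.forall, LinearMap.sub_apply, LinearMap.smul_apply, smul_eq_mul]
  exact ⟨fun h => ⟨h.1, fun i hi j hj => h.2 i j hi hj⟩,
    fun h => ⟨h.1, fun i j hi hj => h.2 i hi j hj⟩⟩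

end FourierMotzkin

section Cones

variable {E M : Type*} [AddCommGroup E] [Module ℝ E] [AddCommGroup M] [Module ℝ M]

theorem mem_hull_insert_iff {s : Set E} {v x : E} :
    x ∈ PointedCone.hull ℝ (insert v s) ↔ ∃ t : ℝ, 0 ≤ t ∧ x - t • v ∈ PointedCone.hull ℝ s := by
  rw [Submodule.mem_span_insert]
  constructor
  · rintro ⟨a, z, hz, rfl⟩
    exact ⟨a, a.2, by simpa using hz⟩
  · rintro ⟨t, ht, hx⟩
    exact ⟨⟨t, ht⟩, _, hx, by simp [Nonneg.mk_smul]⟩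

/-- Weyl's theorem, eliminating one generator at a time by Fourier–Motzkin. -/
theorem isPolyhedron_hull [FiniteDimensional ℝ E] {s : Set E} (hs : s.Finite) :
    IsPolyhedron (PointedCone.hull ℝ s : Set E) := by
  induction s, hs using Set.Finite.induction_on with
  | empty => simpa using isPolyhedron_submodule (⊥ : Submodule ℝ E)
  | @insert v s _ _ ih =>
    let g : E × ℝ →ₗ[ℝ] E := LinearMap.fst ℝ E ℝ - (LinearMap.snd ℝ E ℝ).smulRight v
    have hT : IsPolyhedron {z : E × ℝ | 0 ≤ z.2 ∧ z.1 - z.2 • v ∈ PointedCone.hull ℝ s} := by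
      convert (isPolyhedron_setOf (fun _ : Unit => -LinearMap.snd ℝ E ℝ) 0).inter
        (ih.preimage g) using 1
      ext z
      simp [g]
    convert hT.image_fst using 1
    ext x
    simp [mem_hull_insert_iff]

theorem isPolyhedron_dual (p : M →ₗ[ℝ] E →ₗ[ℝ] ℝ) {s : Set M} (hs : s.Finite) :
    IsPolyhedron (PointedCone.dual p s : Set E) := by
  have := hs.to_subtype
  convert isPolyhedron_setOf (fun x : s => -p x) 0 using 1
  ext y
  simp

theorem IsPolyhedron.exists_eq_dual {C : PointedCone ℝ E} (hC : IsPolyhedron (C : Set E)) :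
    ∃ s : Set (Module.Dual ℝ E), s.Finite ∧ (C : Set E) = PointedCone.dual .id s := by
  obtain ⟨n, f, α, hf⟩ := hC
  have hα : ∀ i, 0 ≤ α i := fun i => by
    simpa using (Set.ext_iff.1 hf 0).1 C.zero_mem i
  refine ⟨Set.range (-f), Set.finite_range _, Set.ext fun x => ?_⟩
  simp only [SetLike.mem_coe, PointedCone.mem_dual, Set.forall_mem_range, LinearMap.id_apply,
    Pi.neg_apply, LinearMap.neg_apply, neg_nonneg]
  refine ⟨fun hx i => ?_, fun hx => (Set.ext_iff.1 hf x).2 fun i => (hx i).trans (hα i)⟩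
  by_contra! hpos
  have hr : 0 ≤ (α i + 1) / f i x := div_nonneg (by linarith [hα i]) hpos.le
  have hmem := (Set.ext_iff.1 hf _).1 (C.smul_mem hr hx) i
  simp only [map_smul, smul_eq_mul, div_mul_cancel₀ _ hpos.ne'] at hmem
  linarith

theorem exists_pointedCone_coe_eq_iUnion {ι : Type*} [Nonempty ι] (C : ι → PointedCone ℝ E)
    (hconv : Convex ℝ (⋃ i, (C i : Set E))) :
    ∃ K : PointedCone ℝ E, (K : Set E) = ⋃ i, (C i : Set E) := by
  obtain ⟨i₀⟩ := ‹Nonempty ι›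
  set U := ⋃ i, (C i : Set E)
  have hsmul : ∀ x ∈ U, ∀ r : ℝ, 0 ≤ r → r • x ∈ U := by
    simp only [U, Set.mem_iUnion]
    exact fun x ⟨i, hx⟩ r hr => ⟨i, (C i).smul_mem hr hx⟩
  have hadd : ∀ x ∈ U, ∀ y ∈ U, x + y ∈ U := fun x hx y hy => by
    simpa [← smul_add, smul_smul] using
      hsmul _ (hconv hx hy (by norm_num : (0 : ℝ) ≤ 1 / 2) (by norm_num : (0 : ℝ) ≤ 1 / 2)
        (by norm_num)) 2 two_pos.le
  exact ⟨_, PointedCone.coe_ofConeComb U ⟨0, Set.mem_iUnion.2 ⟨i₀, (C i₀).zero_mem⟩⟩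
    fun x hx y hy a ha b hb => hadd _ (hsmul x hx a ha) _ (hsmul y hy b hb)⟩

end Cones

section InnerProductSpace

open scoped RealInnerProductSpace
open ProperCone

variable {H : Type*} [NormedAddCommGroup H] [InnerProductSpace ℝ H] [FiniteDimensional ℝ H]

theorem IsPolyhedron.exists_eq_innerDual {C : PointedCone ℝ H} (hC : IsPolyhedron (C : Set H)) :
    ∃ s : Set H, s.Finite ∧ (C : Set H) = innerDual s := by
  obtain ⟨s, hs, hCs⟩ := hC.exists_eq_dual
  let v (φ : Module.Dual ℝ H) : H := (InnerProductSpace.toDual ℝ H).symm φ.toContinuousLinearMap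
  refine ⟨v '' s, hs.image v, hCs.trans (Set.ext fun x => ?_)⟩
  simp [v, InnerProductSpace.toDual_symm_apply]

/-- Farkas' lemma. -/
theorem innerDual_innerDual_of_finite {s : Set H} (hs : s.Finite) :
    (innerDual (innerDual s : Set H) : Set H) = PointedCone.hull ℝ s := by
  let P : ProperCone ℝ H := ⟨PointedCone.hull ℝ s, (isPolyhedron_hull hs).isClosed⟩
  have hP : innerDual (P : Set H) = innerDual s :=
    ProperCone.ext fun y => Set.ext_iff.1 (congrArg SetLike.coe (PointedCone.dual_hull s)) y
  rw [← hP, innerDual_innerDual]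
  rfl

/-- The dual of the union is the intersection of the finitely generated duals of the pieces, so
it is the dual of a finite set; by the bipolar theorem the union is the cone generated by that
set. -/
theorem isPolyhedron_iUnion_pointedCone_of_convex_inner {ι : Type*} [Finite ι] (C : ι → PointedCone ℝ H)
    (hC : ∀ i, IsPolyhedron (C i : Set H)) (hconv : Convex ℝ (⋃ i, (C i : Set H))) :
    IsPolyhedron (⋃ i, (C i : Set H)) := by
  rcases isEmpty_or_nonempty ι with hι | hι
  · simpa using isPolyhedron_empty
  obtain ⟨K₀, hK₀⟩ := exists_pointedCone_coe_eq_iUnion C hconv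
  set U := ⋃ i, (C i : Set H)
  have hUclosed : IsClosed U := isClosed_iUnion_of_finite fun i => (hC i).isClosed
  let K : ProperCone ℝ H := ⟨K₀, show IsClosed (K₀ : Set H) from hK₀ ▸ hUclosed⟩
  choose s hs hCs using fun i => (hC i).exists_eq_innerDual
  have hdual : (innerDual U : Set H) = ⋂ i, (PointedCone.hull ℝ (s i) : Set H) := by
    ext y
    simp only [Set.mem_iInter, ← innerDual_innerDual_of_finite (hs _), ← hCs]
    simp only [U, mem_innerDual, Set.mem_iUnion, SetLike.mem_coe, forall_exists_index]
    exact forall_comm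
  have hpoly : IsPolyhedron (innerDual U : Set H) :=
    hdual ▸ isPolyhedron_iInter fun i => isPolyhedron_hull (hs i)
  obtain ⟨t, ht, hUt⟩ := IsPolyhedron.exists_eq_innerDual (C := (innerDual U).toPointedCone) hpoly
  have hbipolar : U = innerDual (innerDual U : Set H) := by
    rw [← hK₀]
    exact (congrArg SetLike.coe (innerDual_innerDual K)).symm
  rw [hbipolar, show (innerDual U : Set H) = innerDual t from hUt, innerDual_innerDual_of_finite ht]
  exact isPolyhedron_hull ht

end InnerProductSpace

section Klee

variable {E : Type*} [AddCommGroup E] [Module ℝ E]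

theorem isPolyhedron_iUnion_pointedCone_of_convex [FiniteDimensional ℝ E] {ι : Type*} [Finite ι]
    (C : ι → PointedCone ℝ E) (hC : ∀ i, IsPolyhedron (C i : Set E))
    (hconv : Convex ℝ (⋃ i, (C i : Set E))) : IsPolyhedron (⋃ i, (C i : Set E)) := by
  let e : E ≃ₗ[ℝ] EuclideanSpace ℝ (Fin (Module.finrank ℝ E)) :=
    LinearEquiv.ofFinrankEq _ _ (by simp)
  have hcoe : ∀ s : Set E, e.toLinearMap '' s = e.symm ⁻¹' s := e.image_eq_preimage_symm
  have h := isPolyhedron_iUnion_pointedCone_of_convex_inner (fun i => (C i).map e.toLinearMap)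
    (fun i => by
      rw [PointedCone.coe_map, hcoe]
      exact (hC i).preimage e.symm.toLinearMap)
    (by simpa only [PointedCone.coe_map, Set.image_iUnion] using hconv.linear_image e.toLinearMap)
  convert h.preimage e.toLinearMap
  simp only [PointedCone.coe_map, ← Set.image_iUnion, LinearEquiv.coe_coe]
  exact (e.injective.preimage_image _).symm

end Klee

section Homogenization

variable {E : Type*} [AddCommGroup E] [Module ℝ E]

/-- The cone `{(x, r) | 0 ≤ r ∧ ∀ j, f j x ≤ α j * r}`, whose slice at height `r = 1` is the
polyhedron `{x | ∀ j, f j x ≤ α j}`. -/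
def homogenization {n : ℕ} (f : Fin n → Module.Dual ℝ E) (α : Fin n → ℝ) :
    PointedCone ℝ (E × ℝ) :=
  PointedCone.dual .id (insert (LinearMap.snd ℝ E ℝ)
    (Set.range fun j => α j • LinearMap.snd ℝ E ℝ - f j ∘ₗ LinearMap.fst ℝ E ℝ))

variable {n : ℕ} {f : Fin n → Module.Dual ℝ E} {α : Fin n → ℝ}

theorem mem_homogenization {z : E × ℝ} :
    z ∈ homogenization f α ↔ 0 ≤ z.2 ∧ ∀ j, f j z.1 ≤ α j * z.2 := by
  simp [homogenization]

theorem smul_mk_one_mem_homogenization {r : ℝ} (hr : 0 < r) {x : E} :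
    r • ((x, 1) : E × ℝ) ∈ homogenization f α ↔ ∀ j, f j x ≤ α j := by
  simp only [mem_homogenization, Prod.smul_mk, smul_eq_mul, mul_one, map_smul, hr.le, true_and]
  exact forall_congr' fun j => by rw [mul_comm (α j)]; exact mul_le_mul_iff_of_pos_left hr

theorem isPolyhedron_homogenization : IsPolyhedron (homogenization f α : Set (E × ℝ)) :=
  isPolyhedron_dual _ ((Set.finite_range _).insert _)

end Homogenization

section Klee

variable {E : Type*} [AddCommGroup E] [Module ℝ E] [TopologicalSpace E] [IsTopologicalAddGroup E]
  [ContinuousSMul ℝ E] [T2Space E] [FiniteDimensional ℝ E]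

/-- The union of the homogenizations of the nonempty pieces is the closure of the cone over
`(⋃ i, P i) × {1}`. -/
theorem convex_iUnion_homogenization {ι : Type*} [Finite ι] {P : ι → Set E} {n : ι → ℕ}
    {f : ∀ i, Fin (n i) → Module.Dual ℝ E} {α : ∀ i, Fin (n i) → ℝ}
    (hf : ∀ i, P i = {x | ∀ j, f i j x ≤ α i j}) (hconv : Convex ℝ (⋃ i, P i)) :
    Convex ℝ (⋃ i : {i // (P i).Nonempty}, (homogenization (f i) (α i) : Set (E × ℝ))) := by
  set K := ConvexCone.hull ℝ ((⋃ i, P i) ×ˢ ({1} : Set ℝ))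
  have hK : ∀ z, z ∈ K ↔ ∃ r : ℝ, 0 < r ∧ ∃ i, ∃ x ∈ P i, r • ((x, 1) : E × ℝ) = z := by
    intro z
    rw [ConvexCone.mem_hull_of_convex (hconv.prod (convex_singleton 1))]
    simp only [Set.mem_smul_set, Set.mem_prod, Set.mem_iUnion, Set.mem_singleton_iff, Prod.exists]
    exact ⟨fun ⟨r, hr, x, _, ⟨⟨i, hx⟩, rfl⟩, h⟩ => ⟨r, hr, i, x, hx, h⟩,
      fun ⟨r, hr, i, x, hx, h⟩ => ⟨r, hr, x, 1, ⟨⟨i, hx⟩, rfl⟩, h⟩⟩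
  suffices h : ⋃ i : {i // (P i).Nonempty}, (homogenization (f i) (α i) : Set (E × ℝ)) =
      closure K by
    rw [h]
    exact K.convex.closure
  refine subset_antisymm (Set.iUnion_subset fun i z hz => ?_) (closure_minimal ?_ ?_)
  · obtain ⟨w, hw⟩ := i.2
    have hw' : ((w, 1) : E × ℝ) ∈ homogenization (f i) (α i) := by
      simpa using (smul_mk_one_mem_homogenization one_pos).2 (by simpa [hf] using hw)
    refine mem_closure_of_tendsto (f := fun ε : ℝ => z + ε • ((w, 1) : E × ℝ))
      (b := nhdsWithin 0 (Set.Ioi 0)) ?_ ?_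
    · exact tendsto_nhdsWithin_of_tendsto_nhds (Continuous.tendsto' (by fun_prop) _ _ (by simp))
    · filter_upwards [self_mem_nhdsWithin] with ε (hε : 0 < ε)
      have hmem := (homogenization (f i) (α i)).add_mem hz ((homogenization _ _).smul_mem hε.le hw')
      have hr : 0 < z.2 + ε := by linarith [(mem_homogenization.1 hz).1]
      have hz' : z + ε • ((w, 1) : E × ℝ) =
          (z.2 + ε) • (((z.2 + ε)⁻¹ • (z.1 + ε • w), 1) : E × ℝ) := by
        ext <;> simp [smul_smul, hr.ne']
      rw [hz'] at hmem ⊢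
      exact (hK _).2
        ⟨_, hr, i, _, by simpa [hf] using (smul_mk_one_mem_homogenization hr).1 hmem, rfl⟩
  · rintro z hz
    obtain ⟨r, hr, i, x, hx, rfl⟩ := (hK z).1 hz
    refine Set.mem_iUnion.2 ⟨⟨i, x, hx⟩, (smul_mk_one_mem_homogenization hr).2 ?_⟩
    simpa [hf] using hx
  · exact isClosed_iUnion_of_finite fun i => isPolyhedron_homogenization.isClosed

/-- Klee's theorem. -/
theorem isPolyhedron_iUnion_of_convex {ι : Type*} [Finite ι] {P : ι → Set E}
    (hP : ∀ i, IsPolyhedron (P i)) (hconv : Convex ℝ (⋃ i, P i)) : IsPolyhedron (⋃ i, P i) := by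
  choose n f α hf using hP
  have hC := isPolyhedron_iUnion_pointedCone_of_convex (fun i : {i // (P i).Nonempty} =>
    homogenization (f i) (α i)) (fun _ => isPolyhedron_homogenization)
    (convex_iUnion_homogenization hf hconv)
  convert (hC.vadd (-((0, 1) : E × ℝ))).preimage (LinearMap.inl ℝ E ℝ)
  ext x
  have : ∀ i, x ∈ P i ↔ ((x, 1) : E × ℝ) ∈ homogenization (f i) (α i) := fun i => by
    simpa [hf] using (smul_mk_one_mem_homogenization (f := f i) (α := α i) one_pos (x := x)).symm
  simp only [Set.mem_iUnion, Set.mem_preimage, Set.mem_vadd_set_iff_neg_vadd_mem, neg_neg,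
    LinearMap.inl_apply, vadd_eq_add, Prod.mk_add_mk, zero_add, add_zero, SetLike.mem_coe]
  exact ⟨fun ⟨i, hi⟩ => ⟨⟨i, x, hi⟩, (this i).1 hi⟩, fun ⟨i, hi⟩ => ⟨i, (this i).2 hi⟩⟩

end Klee

section Lineality

variable {X : Type*} [AddCommGroup X] [Module ℝ X]

def linealitySpace (D : Set X) : Submodule ℝ X where
  carrier := {v | ∀ x ∈ D, ∀ t : ℝ, x + t • v ∈ D}
  add_mem' {u v} hu hv x hx t := by simpa [smul_add, add_assoc] using hv _ (hu x hx t) t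
  zero_mem' x hx t := by simpa using hx
  smul_mem' c v hv x hx t := by simpa [smul_smul] using hv x hx (t * c)

theorem mem_linealitySpace {D : Set X} {v : X} :
    v ∈ linealitySpace D ↔ ∀ x ∈ D, ∀ t : ℝ, x + t • v ∈ D :=
  Iff.rfl

variable [TopologicalSpace X] [IsTopologicalAddGroup X] [ContinuousSMul ℝ X]

theorem isClosed_linealitySpace {D : Set X} (hD : IsClosed D) :
    IsClosed (linealitySpace D : Set X) := by
  have : (linealitySpace D : Set X) = ⋂ x ∈ D, ⋂ t : ℝ, (fun v => x + t • v) ⁻¹' D := by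
    ext v
    simp [mem_linealitySpace]
  rw [this]
  exact isClosed_biInter fun x _ => isClosed_iInter fun t => hD.preimage (by fun_prop)

/-- `x + v` is the limit, as `s → 0⁺`, of `(1 - s) • x + s • (y + s⁻¹ • v)`. -/
theorem Convex.add_mem_of_forall_add_smul_mem {D : Set X} (hconv : Convex ℝ D) (hD : IsClosed D)
    {x y v : X} (hx : x ∈ D) (hray : ∀ t : ℝ, 0 ≤ t → y + t • v ∈ D) : x + v ∈ D := by
  refine hD.mem_of_tendsto (f := fun s : ℝ => x + v + s • (y - x)) (b := nhdsWithin 0 (Set.Ioi 0))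
    (tendsto_nhdsWithin_of_tendsto_nhds (Continuous.tendsto' (by fun_prop) _ _ (by simp))) ?_
  filter_upwards [Ioc_mem_nhdsGT one_pos] with s ⟨hs, hs1⟩
  convert hconv hx (hray s⁻¹ (inv_nonneg.2 hs.le)) (sub_nonneg.2 hs1) hs.le (by ring) using 1
  rw [smul_add, smul_smul, mul_inv_cancel₀ hs.ne', one_smul, sub_smul, one_smul, smul_sub]
  abel

theorem linealitySpace_le_of_subset {D₀ D : Set X} (hconv : Convex ℝ D) (hD : IsClosed D)
    (hsub : D₀ ⊆ D) (hne : D₀.Nonempty) : linealitySpace D₀ ≤ linealitySpace D := by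
  obtain ⟨w, hw⟩ := hne
  intro v hv x hx t
  exact hconv.add_mem_of_forall_add_smul_mem hD hx fun s _ =>
    hsub (by simpa [smul_smul] using hv w hw (s * t))

end Lineality

section Subspaces

variable {X : Type*} [AddCommGroup X] [Module ℝ X]

theorem Submodule.exists_finiteDimensional_le_sup_ker {Y : Type*} [AddCommGroup Y] [Module ℝ Y]
    [FiniteDimensional ℝ Y] (φ : X →ₗ[ℝ] Y) (W : Submodule ℝ X) :
    ∃ U : Submodule ℝ X, FiniteDimensional ℝ U ∧ W ≤ W ⊓ LinearMap.ker φ ⊔ U := by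
  obtain ⟨C, hC⟩ := Submodule.exists_isCompl (LinearMap.ker (φ ∘ₗ W.subtype))
  have : FiniteDimensional ℝ C := Module.Finite.of_injective (φ ∘ₗ W.subtype ∘ₗ C.subtype) <|
    (injective_iff_map_eq_zero _).2 fun c hc => by
      simpa using Submodule.disjoint_def.1 hC.disjoint c hc c.2
  refine ⟨C.map W.subtype, inferInstance, fun w hw => ?_⟩
  obtain ⟨k, hk, c, hc, hkc⟩ :=
    Submodule.mem_sup.1 (hC.sup_eq_top ▸ Submodule.mem_top : (⟨w, hw⟩ : W) ∈ _ ⊔ C)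
  rw [← show (k : X) + c = w from congrArg Subtype.val hkc]
  exact Submodule.add_mem_sup ⟨k.2, hk⟩ (Submodule.mem_map_of_mem hc)

theorem Submodule.exists_disjoint_le_sup (L V : Submodule ℝ X) [FiniteDimensional ℝ V] :
    ∃ V₁ : Submodule ℝ X, FiniteDimensional ℝ V₁ ∧ Disjoint L V₁ ∧ L ⊔ V ≤ L ⊔ V₁ := by
  obtain ⟨⟨c, hcV : c ≤ V⟩, hc⟩ :=
    ComplementedLattice.exists_isCompl (α := Set.Iic V) ⟨L ⊓ V, Set.mem_Iic.2 inf_le_right⟩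
  have hinf : L ⊓ V ⊓ c = ⊥ := congrArg Subtype.val hc.inf_eq_bot
  have hsup : L ⊓ V ⊔ c = V := congrArg Subtype.val hc.sup_eq_top
  refine ⟨c, Submodule.finiteDimensional_of_le hcV, disjoint_iff.2 ?_, ?_⟩
  · rwa [← inf_eq_right.2 hcV, ← inf_assoc]
  · exact sup_le le_sup_left (hsup ▸ sup_le (inf_le_left.trans le_sup_left) le_sup_right)

variable [TopologicalSpace X] [IsTopologicalAddGroup X] [ContinuousSMul ℝ X]

theorem Submodule.isClosed_sup_of_finiteDimensional {L V : Submodule ℝ X} [FiniteDimensional ℝ V]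
    (hL : IsClosed (L : Set X)) : IsClosed ((L ⊔ V : Submodule ℝ X) : Set X) := by
  have : IsClosed (L : Set X) := hL
  rw [← Submodule.comap_map_mkQ]
  exact (Submodule.closed_of_finiteDimensional (V.map L.mkQ)).preimage L.mkQL.continuous

variable [LocallyConvexSpace ℝ X]

theorem separatingDual_quotient {L : Submodule ℝ X} (hL : IsClosed (L : Set X)) :
    SeparatingDual ℝ (X ⧸ L) := by
  refine ⟨fun q hq => ?_⟩
  obtain ⟨x, rfl⟩ := L.mkQ_surjective q
  have hx : x ∉ L := by simpa [Submodule.Quotient.mk_eq_zero] using hq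
  obtain ⟨f, u, hfu, hux⟩ := geometric_hahn_banach_closed_point L.convex hL hx
  have hf : ∀ l ∈ L, f l = 0 := fun l hl => by
    by_contra hfl
    simpa [div_mul_cancel₀ _ hfl] using hfu _ (L.smul_mem (u / f l) hl)
  have hu : 0 < u := by simpa using hfu 0 L.zero_mem
  exact ⟨L.liftQL f hf, (hu.trans hux).ne'⟩

theorem exists_continuousLinearMap_extension_of_disjoint {L V : Submodule ℝ X}
    [FiniteDimensional ℝ V] (hL : IsClosed (L : Set X)) (hLV : Disjoint L V) (g : V →ₗ[ℝ] ℝ) :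
    ∃ F : X →L[ℝ] ℝ, (∀ l ∈ L, F l = 0) ∧ ∀ v : V, F v = g v := by
  have := separatingDual_quotient hL
  have hinj : Function.Injective (L.mkQ ∘ₗ V.subtype) := by
    refine (injective_iff_map_eq_zero _).2 fun v hv => ?_
    have hvL : (v : X) ∈ L := (Submodule.Quotient.mk_eq_zero L).1 hv
    simpa using Submodule.disjoint_def.1 hLV _ hvL v.2
  obtain ⟨ψ, hψ⟩ := SeparatingDual.dualMap_surjective_iff.2 hinj g
  refine ⟨ψ.comp L.mkQL, fun l hl => by simp [(Submodule.Quotient.mk_eq_zero L).2 hl],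
    fun v => ?_⟩
  simpa using LinearMap.congr_fun hψ v

end Subspaces

section GPCS

variable {X : Type*} [AddCommGroup X] [Module ℝ X] [TopologicalSpace X]

theorem IsGPCS.isClosed {D : Set X} (hD : IsGPCS D) : IsClosed D := by
  obtain ⟨p, f, α, x₀, W, hW, rfl⟩ := hD
  rw [Set.ofPred_and, Set.ofPred_mem_eq, Set.ofPred_forall]
  exact hW.inter (isClosed_iInter fun i => isClosed_le (f i).continuous continuous_const)

/-- `{x ∈ x₀ + W | ∀ i, f i x ≤ α i}` is invariant under `W ⊓ ⋂ i, ker (f i)`, which has finite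
codimension in `W`. -/
theorem IsGPCS.exists_subset_linealitySpace_sup {D : Set X} (hD : IsGPCS D) :
    ∃ V : Submodule ℝ X, FiniteDimensional ℝ V ∧ D ⊆ (linealitySpace D ⊔ V : Submodule ℝ X) := by
  obtain ⟨p, f, α, x₀, W, -, rfl⟩ := hD
  obtain ⟨U, _, hWU⟩ := Submodule.exists_finiteDimensional_le_sup_ker
    (LinearMap.pi fun i => (f i : X →ₗ[ℝ] ℝ)) W
  have hK : W ⊓ LinearMap.ker (LinearMap.pi fun i => (f i : X →ₗ[ℝ] ℝ)) ≤
      linealitySpace {x ∈ x₀ +ᵥ (W : Set X) | ∀ i, f i x ≤ α i} := by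
    rintro k ⟨hkW, hkf⟩ x ⟨hxW, hxf⟩ t
    have hkf' : ∀ i, f i k = 0 := fun i => congrFun hkf i
    refine ⟨?_, fun i => by simpa [hkf'] using hxf i⟩
    rw [Set.mem_vadd_set_iff_neg_vadd_mem] at hxW ⊢
    simpa [add_assoc] using W.add_mem hxW (W.smul_mem t hkW)
  refine ⟨U ⊔ Submodule.span ℝ {x₀}, inferInstance, fun x ⟨hxW, _⟩ => ?_⟩
  rw [Set.mem_vadd_set_iff_neg_vadd_mem, vadd_eq_add, neg_add_eq_sub] at hxW
  rw [← sub_add_cancel x x₀, ← sup_assoc]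
  exact Submodule.add_mem_sup (sup_le_sup_right hK U (hWU hxW))
    (Submodule.mem_span_singleton_self x₀)

theorem IsGPCS.isPolyhedron_preimage {E : Type*} [AddCommGroup E] [Module ℝ E]
    [FiniteDimensional ℝ E] {D : Set X} (hD : IsGPCS D) (g : E →ₗ[ℝ] X) :
    IsPolyhedron (g ⁻¹' D) := by
  obtain ⟨p, f, α, x₀, W, -, rfl⟩ := hD
  rw [Set.ofPred_and, Set.ofPred_mem_eq, Set.preimage_inter]
  refine IsPolyhedron.inter ?_ ((isPolyhedron_setOf (fun i => (f i : X →ₗ[ℝ] ℝ)) α).preimage g)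
  rcases (g ⁻¹' (x₀ +ᵥ (W : Set X))).eq_empty_or_nonempty with h | ⟨e₀, he₀⟩
  · exact h ▸ isPolyhedron_empty
  convert (isPolyhedron_submodule (W.comap g)).vadd e₀ using 1
  ext e
  simp only [Set.mem_preimage, Set.mem_vadd_set_iff_neg_vadd_mem, vadd_eq_add, SetLike.mem_coe,
    Submodule.mem_comap, map_add, map_neg] at he₀ ⊢
  constructor <;> intro h
  · convert W.sub_mem h he₀ using 1
    abel
  · convert W.add_mem h he₀ using 1
    abel

variable [IsTopologicalAddGroup X] [ContinuousSMul ℝ X] [LocallyConvexSpace ℝ X]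

/-- `D = L + (D ∩ V)`, and the inequalities cutting out `D ∩ V` in `V` extend to continuous
functionals vanishing on `L`. -/
theorem isGPCS_of_isPolyhedron_preimage {D : Set X} {L V : Submodule ℝ X} [FiniteDimensional ℝ V]
    (hL : IsClosed (L : Set X)) (hLV : Disjoint L V) (hDL : L ≤ linealitySpace D)
    (hDV : D ⊆ (L ⊔ V : Submodule ℝ X)) (hQ : IsPolyhedron (V.subtype ⁻¹' D)) : IsGPCS D := by
  obtain ⟨n, g, β, hg⟩ := hQ
  choose F hFL hFV using fun k => exists_continuousLinearMap_extension_of_disjoint hL hLV (g k)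
  have key : ∀ l ∈ L, ∀ v : V, l + v ∈ D ↔ ∀ k, F k (l + v) ≤ β k := fun l hl v => by
    have hv : l + v ∈ D ↔ (v : X) ∈ D :=
      ⟨fun h => by simpa using hDL hl _ h (-1), fun h => by simpa [add_comm] using hDL hl _ h 1⟩
    simp only [hv, map_add, hFL _ l hl, hFV, zero_add]
    exact Set.ext_iff.1 hg v
  refine ⟨n, F, β, 0, L ⊔ V, by simpa using Submodule.isClosed_sup_of_finiteDimensional hL,
    Set.ext fun x => ⟨fun hx => ?_, fun ⟨hx, hxF⟩ => ?_⟩⟩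
  · obtain ⟨l, hl, v, hv, rfl⟩ := Submodule.mem_sup.1 (hDV hx)
    exact ⟨by simpa using Submodule.add_mem_sup hl hv, (key l hl ⟨v, hv⟩).1 hx⟩
  · obtain ⟨l, hl, v, hv, rfl⟩ := Submodule.mem_sup.1 (by simpa using hx)
    exact (key l hl ⟨v, hv⟩).2 hxF

end GPCS

/-- A convex set which is a finite union of generalized polyhedral convex sets
is itself a generalized polyhedral convex set. -/
theorem convex_union_isGPCS {X : Type*} [AddCommGroup X] [Module ℝ X] [TopologicalSpace X]
    [IsTopologicalAddGroup X] [ContinuousSMul ℝ X] [LocallyConvexSpace ℝ X] [T2Space X]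
    (m : ℕ) (D : Fin m → Set X) (hD : ∀ i, IsGPCS (D i))
    (D' : Set X) (hconv : Convex ℝ D') (hunion : D' = ⋃ i, D i) :
    IsGPCS D' := by
  have hclosed : IsClosed D' := hunion ▸ isClosed_iUnion_of_finite fun i => (hD i).isClosed
  choose V _ hDV using fun i => (hD i).exists_subset_linealitySpace_sup
  have hcover : D' ⊆ (linealitySpace D' ⊔ ⨆ i, V i : Submodule ℝ X) := fun x hx => by
    obtain ⟨i, hxi⟩ := Set.mem_iUnion.1 (hunion ▸ hx)
    have hsub : D i ⊆ D' := hunion ▸ Set.subset_iUnion D i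
    exact sup_le_sup (linealitySpace_le_of_subset hconv hclosed hsub ⟨x, hxi⟩) (le_iSup V i)
      (hDV i hxi)
  obtain ⟨V₁, _, hdisj, hsup⟩ := Submodule.exists_disjoint_le_sup (linealitySpace D') (⨆ i, V i)
  refine isGPCS_of_isPolyhedron_preimage (isClosed_linealitySpace hclosed) hdisj le_rfl
    (hcover.trans (SetLike.coe_subset_coe.2 hsup)) ?_
  have hQ := hconv.linear_preimage V₁.subtype
  rw [hunion, Set.preimage_iUnion] at hQ ⊢
  exact isPolyhedron_iUnion_of_convex (fun i => (hD i).isPolyhedron_preimage _) hQ
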